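/- Let a, b be natural numbers and let S be an a × b matrix over GF(2) of full column rank b such that every row of S has at most two nonzero entries. Then for every nonempty subset T of the column indices there exists a row of S whose set of nonzero positions intersects T in exactly one element. (Otherwise the indicator vector of T would lie in the kernel of S, contradicting full column rank; this is the step that allows backward substitution to continue.) -/

import Mathlib

open Finset

theorem ZMod.sum_eq_card_filter_ne_zero {ι : Type*} (s : Finset ι) (f : ι → ZMod 2) :
    ∑ i ∈ s, f i = #{i ∈ s | f i ≠ 0} := by
  rw [natCast_card_filter]
  refine sum_congr rfl fun i _ => ?_
  generalize f i = y
  fin_cases y <;> rfl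

namespace Matrix

variable {m n K : Type*} [Fintype n]

theorem mulVec_injective_of_rank_eq_card [Field K] {A : Matrix m n K}
    (hA : A.rank = Fintype.card n) : Function.Injective A.mulVec := by
  have hsum := LinearMap.finrank_range_add_finrank_ker A.mulVecLin
  rw [← rank, hA, Module.finrank_fintype_fun_eq_card] at hsum
  have hker : LinearMap.ker A.mulVecLin = ⊥ := Submodule.finrank_eq_zero.mp (by omega)
  exact LinearMap.ker_eq_bot.mp hker

theorem mulVec_indicator_apply [DecidableEq n] {R : Type*} [NonAssocSemiring R]
    (A : Matrix m n R) (T : Finset n) (i : m) :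
    (A *ᵥ fun j => if j ∈ T then 1 else 0) i = ∑ j ∈ T, A i j := by
  simp [mulVec, dotProduct, mul_ite, sum_ite_mem]

/-- Over GF(2), a set `T` of columns all of whose rows meet `T` evenly gives the kernel vector
`𝟙_T`; full column rank excludes it. -/
theorem exists_odd_card_support_inter_of_rank_eq_card [DecidableEq n] {A : Matrix m n (ZMod 2)}
    (hA : A.rank = Fintype.card n) {T : Finset n} (hT : T.Nonempty) :
    ∃ i, Odd #(({j | A i j ≠ 0} : Finset n) ∩ T) := by
  by_contra! hEven
  set x : n → ZMod 2 := fun j => if j ∈ T then 1 else 0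
  have hx : A *ᵥ x = A *ᵥ 0 := by
    ext i
    rw [mulVec_indicator_apply, ZMod.sum_eq_card_filter_ne_zero, mulVec_zero, Pi.zero_apply,
      ZMod.natCast_eq_zero_iff_even, ← univ_inter T, ← filter_inter]
    exact Nat.not_odd_iff_even.mp (hEven i)
  obtain ⟨t, ht⟩ := hT
  simpa [x, ht] using congrFun (mulVec_injective_of_rank_eq_card hA hx) t

end Matrix

/-- If an `a × b` matrix over GF(2) has full column rank `b` and each
row has at most two nonzero entries, then for every nonempty set `T` of column
indices there is a row whose support intersects `T` in exactly one element. -/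
theorem stmt_2 (a b : ℕ) (S : Matrix (Fin a) (Fin b) (ZMod 2))
    (hrank : S.rank = b)
    (hrow : ∀ i : Fin a, (Finset.univ.filter fun j => S i j ≠ 0).card ≤ 2) :
    ∀ T : Finset (Fin b), T.Nonempty →
      ∃ i : Fin a, ((Finset.univ.filter fun j => S i j ≠ 0) ∩ T).card = 1 := by
  intro T hT
  obtain ⟨i, k, hk⟩ :=
    Matrix.exists_odd_card_support_inter_of_rank_eq_card (A := S) (by simpa using hrank) hT
  have hle := (card_le_card (inter_subset_left (s₂ := T))).trans (hrow i)
  exact ⟨i, by omega⟩
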